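/- If two vertex orderings S and S' of a graph induce the same relative order on every pair of adjacent vertices (i.e., for all edges uv, u precedes v in S if and only if u precedes v in S'), then the first-fit colorings along S and S' are identical. -/

import Mathlib

open SimpleGraph

/-- First-fit coloring along a vertex sequence: each vertex in turn receives the
smallest positive integer not used on its already-colored neighbors. Uncolored
vertices have color `0`. -/
noncomputable def firstFit {V : Type*} [DecidableEq V] (G : SimpleGraph V) (l : List V) :
    V → ℕ :=
  l.foldl (fun c v => Function.update c v
    (sInf {k | 0 < k ∧ ∀ u, G.Adj v u → c u ≠ k})) (fun _ => 0)

/-- `l` is an ordering of all vertices. -/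
def IsOrdering {V : Type*} (l : List V) : Prop := l.Nodup ∧ ∀ v : V, v ∈ l

/-- `l` is a connected ordering: every vertex after the first has a neighbor earlier. -/
def IsConnectedOrdering {V : Type*} (G : SimpleGraph V) (l : List V) : Prop :=
  IsOrdering l ∧ ∀ i (hi : i < l.length), 0 < i → ∃ u ∈ l.take i, G.Adj u (l.get ⟨i, hi⟩)

/-- Number of colors used by first-fit along `l`. -/
noncomputable def numColors {V : Type*} [Fintype V] [DecidableEq V] (G : SimpleGraph V)
    (l : List V) : ℕ :=
  Finset.univ.sup (firstFit G l)

/-- The Grundy number: maximum number of first-fit colors over all vertex orderings. -/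
noncomputable def grundy {V : Type*} [Fintype V] [DecidableEq V] (G : SimpleGraph V) : ℕ :=
  sSup {k | ∃ l : List V, IsOrdering l ∧ k = numColors G l}

/-- The connected Grundy number: maximum number of first-fit colors over connected orderings. -/
noncomputable def connGrundy {V : Type*} [Fintype V] [DecidableEq V] (G : SimpleGraph V) : ℕ :=
  sSup {k | ∃ l : List V, IsConnectedOrdering G l ∧ k = numColors G l}


/-!
In a duplicate-free list, the first-fit color of `v` is the least positive integer not used on
the neighbours of `v` that occur earlier in the list. The hypothesis says that `S` and `S'` have
the same earlier neighbours of every vertex, so strong induction on the position in `S` shows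
that the two colorings agree.
-/

theorem List.mem_take_idxOf_iff {α : Type*} [DecidableEq α] {l : List α} {u v : α}
    (hv : v ∈ l) : u ∈ l.take (l.idxOf v) ↔ l.idxOf u < l.idxOf v := by
  by_cases hu : u ∈ l
  · exact List.mem_take_iff_idxOf_lt hu
  · rw [List.idxOf_eq_length hu]
    exact iff_of_false (fun h => hu (List.mem_of_mem_take h))
      (not_lt.mpr (List.idxOf_lt_length_iff.mpr hv).le)

section

variable {V : Type*} [DecidableEq V] (G : SimpleGraph V)

noncomputable def firstFitStep (c : V → ℕ) (v : V) : V → ℕ :=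
  Function.update c v (sInf {k | 0 < k ∧ ∀ u, G.Adj v u → c u ≠ k})

theorem firstFit_eq_foldl (l : List V) :
    firstFit G l = l.foldl (firstFitStep G) (fun _ => 0) := rfl

theorem foldl_firstFitStep_of_not_mem {v : V} {l : List V} (hv : v ∉ l) (c : V → ℕ) :
    l.foldl (firstFitStep G) c v = c v := by
  induction l generalizing c with
  | nil => rfl
  | cons a t ih =>
    rw [List.mem_cons, not_or] at hv
    rw [List.foldl_cons, ih hv.2, firstFitStep, Function.update_of_ne hv.1]

theorem firstFit_of_not_mem {v : V} {l : List V} (hv : v ∉ l) : firstFit G l v = 0 :=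
  foldl_firstFitStep_of_not_mem G hv _

theorem firstFit_append_of_not_mem {v : V} {s t : List V} (hv : v ∉ t) :
    firstFit G (s ++ t) v = firstFit G s v := by
  rw [firstFit_eq_foldl, List.foldl_append, foldl_firstFitStep_of_not_mem G hv]
  rfl

theorem firstFit_append_cons_self {v : V} {s t : List V} (hv : v ∉ t) :
    firstFit G (s ++ v :: t) v = sInf {k | 0 < k ∧ ∀ u, G.Adj v u → firstFit G s u ≠ k} := by
  rw [← List.singleton_append, ← List.append_assoc, firstFit_append_of_not_mem G hv,
    firstFit_eq_foldl, List.foldl_append, List.foldl_cons, List.foldl_nil, firstFitStep,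
    Function.update_self]
  rfl

theorem firstFit_eq_sInf_of_nodup {l : List V} (hl : l.Nodup) {v : V} (hv : v ∈ l) :
    firstFit G l v = sInf {k | 0 < k ∧ ∀ u, G.Adj v u →
      l.idxOf u < l.idxOf v → firstFit G l u ≠ k} := by
  set s := l.take (l.idxOf v) with hs
  set t := l.drop (l.idxOf v + 1)
  have hl_eq : l = s ++ v :: t := by
    have hi := List.idxOf_lt_length_iff.mpr hv
    rw [← List.getElem_idxOf hi, ← List.drop_eq_getElem_cons hi, List.take_append_drop]
  have hl' : (s ++ v :: t).Nodup := hl_eq ▸ hl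
  rw [List.nodup_append, List.nodup_cons] at hl'
  obtain ⟨-, ⟨hvt, -⟩, hdisj⟩ := hl'
  conv_lhs => rw [hl_eq, firstFit_append_cons_self G hvt]
  congr 1
  ext k
  refine and_congr_right fun hk => forall_congr' fun u => forall_congr' fun _ => ?_
  rw [← List.mem_take_idxOf_iff hv, ← hs]
  by_cases hu : u ∈ s
  · have hu_color : firstFit G l u = firstFit G s u := by
      conv_lhs => rw [hl_eq]
      exact firstFit_append_of_not_mem G fun h => hdisj u hu u h rfl
    rw [hu_color, imp_iff_right hu]
  · rw [firstFit_of_not_mem G hu]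
    exact iff_of_true hk.ne fun hu' => absurd hu' hu

end

theorem stmt10 {V : Type*} [DecidableEq V] (G : SimpleGraph V) (S S' : List V)
    (h1 : IsOrdering S) (h2 : IsOrdering S')
    (h : ∀ u w : V, G.Adj u w → (S.idxOf u < S.idxOf w ↔ S'.idxOf u < S'.idxOf w)) :
    firstFit G S = firstFit G S' := by
  obtain ⟨hS, hS_mem⟩ := h1
  obtain ⟨hS', hS'_mem⟩ := h2
  funext v
  induction hn : S.idxOf v using Nat.strong_induction_on generalizing v with
  | _ n ih =>
  rw [firstFit_eq_sInf_of_nodup G hS (hS_mem v), firstFit_eq_sInf_of_nodup G hS' (hS'_mem v)]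
  congr 1
  ext k
  refine and_congr_right fun _ => forall_congr' fun u => forall_congr' fun hadj => ?_
  rw [← h u v hadj.symm]
  exact imp_congr_right fun hlt => by rw [ih _ (hn ▸ hlt) u rfl]
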